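/- For the two-level outage model, the expected number of customers restored by repairing line j at time t equals (∏_{k ∈ Q_j \ {j}} P(L_k = 0)) · P(L_j = 1) · (n_{S_j} + Σ_{s ∈ W_j} (∏_{k ∈ ancestors up to s} P(L_k = 0)) · n_s), assuming independent faults: customers on segment S_j (and downstream segments s with no intervening faults) are restored if and only if j was the unique faulted line on their root path among the relevant lines. -/
import Mathlib

lemma key_sum {K : Type*} [Fintype K] [DecidableEq K] (ρ : K → ℝ) (j : K)
    (T : Finset K) (hjT : j ∉ T) :
    (∑ ω : K → Bool, (∏ k : K, (if ω k = true then ρ k else 1 - ρ k)) *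
      (if ω j = true ∧ ∀ k ∈ T, ω k = false then (1:ℝ) else 0)) =
    ρ j * ∏ k ∈ T, (1 - ρ k) := by
  set e : K → Bool → ℝ := fun k b =>
    if k = j then (if b then 1 else 0) else if k ∈ T then (if b then 0 else 1) else 1 with he
  have hind : ∀ ω : K → Bool,
      (if ω j = true ∧ ∀ k ∈ T, ω k = false then (1:ℝ) else 0) = ∏ k : K, e k (ω k) := by
    intro ω
    by_cases h : ω j = true ∧ ∀ k ∈ T, ω k = false
    · rw [if_pos h]
      refine (Finset.prod_eq_one ?_).symm
      intro k _
      by_cases hk : k = j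
      · subst hk; simp [he, h.1]
      · by_cases hk2 : k ∈ T
        · simp [he, hk, hk2, h.2 k hk2]
        · simp [he, hk, hk2]
    · rw [if_neg h]
      push_neg at h
      by_cases hjtrue : ω j = true
      · obtain ⟨k, hkT, hk⟩ := h hjtrue
        have hkj : k ≠ j := by rintro rfl; exact hjT hkT
        have hkt : ω k = true := by simpa using hk
        exact (Finset.prod_eq_zero (Finset.mem_univ k) (by simp [he, hkj, hkT, hkt])).symm
      · have : ω j = false := by simpa using hjtrue
        exact (Finset.prod_eq_zero (Finset.mem_univ j) (by simp [he, this])).symm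
  have hrw : (∑ ω : K → Bool, (∏ k : K, (if ω k = true then ρ k else 1 - ρ k)) *
      (if ω j = true ∧ ∀ k ∈ T, ω k = false then (1:ℝ) else 0))
      = ∑ ω : K → Bool, ∏ k : K, ((if ω k = true then ρ k else 1 - ρ k) * e k (ω k)) := by
    refine Finset.sum_congr rfl fun ω _ => ?_
    rw [hind ω, ← Finset.prod_mul_distrib]
  rw [hrw, ← Fintype.prod_sum (fun k (b : Bool) => (if b = true then ρ k else 1 - ρ k) * e k b)]
  have houter : ∀ k ∈ Finset.univ, k ∉ insert j T →
      (∑ b : Bool, (if b = true then ρ k else 1 - ρ k) * e k b) = 1 := by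
    intro k _ hk
    simp only [Finset.mem_insert, not_or] at hk
    simp [he, hk.1, hk.2, Fintype.sum_bool]
  rw [← Finset.prod_subset (Finset.subset_univ (insert j T)) houter,
    Finset.prod_insert hjT]
  have h1 : (∑ b : Bool, (if b = true then ρ j else 1 - ρ j) * e j b) = ρ j := by
    simp [he, Fintype.sum_bool]
  rw [h1]
  congr 1
  refine Finset.prod_congr rfl fun k hk => ?_
  have hkj : k ≠ j := by rintro rfl; exact hjT hk
  simp [he, hkj, hk, Fintype.sum_bool]



/-- Expected number of customers restored by repairing line `j`.  Faults are
independent Bernoulli indicators: the sample space is `K → Bool` with product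
pmf given by marginal fault probabilities `ρ k`.  `Qj` is the set of lines
whose fault causes outage at `j` (with `j ∈ Qj`), `nSj` the number of
customers on `j`'s segment, `Wj` the set of downstream segments with `n s`
customers each, and `A s` the set of intervening lines between `j` and
segment `s` (disjoint from `Qj`).  A customer is restored by repairing `j`
exactly when `j` was faulted and no other line on the path from the
substation to that customer is faulted; the expectation then factorizes as
`(∏_{k ∈ Qj∖{j}} (1-ρ k)) ρ j (n_{Sj} + Σ_{s ∈ Wj} (∏_{k ∈ A s} (1-ρ k)) n s)`. -/
theorem expected_customers_restored_by_repair
    {K : Type*} [Fintype K] [DecidableEq K] {σ : Type*} [DecidableEq σ]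
    (ρ : K → ℝ) (hρ0 : ∀ k, 0 ≤ ρ k) (hρ1 : ∀ k, ρ k ≤ 1)
    (j : K) (Qj : Finset K) (hj : j ∈ Qj)
    (Wj : Finset σ) (A : σ → Finset K)
    (hA : ∀ s ∈ Wj, Disjoint (A s) Qj)
    (nSj : ℝ) (n : σ → ℝ) :
    (∑ ω : K → Bool,
        (∏ k : K, (if ω k = true then ρ k else 1 - ρ k)) *
          ((if ω j = true ∧ ∀ k ∈ Qj.erase j, ω k = false then (1:ℝ) else 0) *
            (nSj + ∑ s ∈ Wj,
              (if ∀ k ∈ A s, ω k = false then (1:ℝ) else 0) * n s))) =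
      (∏ k ∈ Qj.erase j, (1 - ρ k)) * ρ j *
        (nSj + ∑ s ∈ Wj, (∏ k ∈ A s, (1 - ρ k)) * n s) := by
  classical
  have hQ : j ∉ Qj.erase j := Finset.notMem_erase j Qj
  set w : (K → Bool) → ℝ := fun ω => ∏ k : K, (if ω k = true then ρ k else 1 - ρ k) with hw
  have step : ∀ ω : K → Bool,
      w ω * ((if ω j = true ∧ ∀ k ∈ Qj.erase j, ω k = false then (1:ℝ) else 0) *
          (nSj + ∑ s ∈ Wj, (if ∀ k ∈ A s, ω k = false then (1:ℝ) else 0) * n s))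
      = (w ω * (if ω j = true ∧ ∀ k ∈ Qj.erase j, ω k = false then (1:ℝ) else 0)) * nSj
        + ∑ s ∈ Wj, (w ω *
            (if ω j = true ∧ ∀ k ∈ Qj.erase j ∪ A s, ω k = false then (1:ℝ) else 0)) * n s := by
    intro ω
    have hmerge : ∀ s ∈ Wj,
        (if ω j = true ∧ ∀ k ∈ Qj.erase j, ω k = false then (1:ℝ) else 0) *
          (if ∀ k ∈ A s, ω k = false then (1:ℝ) else 0)
        = (if ω j = true ∧ ∀ k ∈ Qj.erase j ∪ A s, ω k = false then (1:ℝ) else 0) := by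
      intro s _
      by_cases h1 : ω j = true ∧ ∀ k ∈ Qj.erase j, ω k = false <;>
        by_cases h2 : ∀ k ∈ A s, ω k = false
      · rw [if_pos h1, if_pos h2, if_pos]
        · ring
        · exact ⟨h1.1, fun k hk => (Finset.mem_union.mp hk).elim (h1.2 k) (h2 k)⟩
      · rw [if_pos h1, if_neg h2, if_neg]
        · ring
        · rintro ⟨-, h⟩
          exact h2 fun k hk => h k (Finset.mem_union_right _ hk)
      all_goals
        rw [if_neg h1, if_neg (show ¬(ω j = true ∧ ∀ k ∈ Qj.erase j ∪ A s, ω k = false) from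
          fun hc => h1 ⟨hc.1, fun k hk => hc.2 k (Finset.mem_union_left _ hk)⟩)]
        ring
    rw [mul_add, mul_add, Finset.mul_sum, Finset.mul_sum]
    congr 1
    · ring
    · refine Finset.sum_congr rfl fun s hs => ?_
      rw [← hmerge s hs]; ring
  calc (∑ ω : K → Bool,
        w ω * ((if ω j = true ∧ ∀ k ∈ Qj.erase j, ω k = false then (1:ℝ) else 0) *
            (nSj + ∑ s ∈ Wj, (if ∀ k ∈ A s, ω k = false then (1:ℝ) else 0) * n s)))
      = (∑ ω : K → Bool,
          w ω * (if ω j = true ∧ ∀ k ∈ Qj.erase j, ω k = false then (1:ℝ) else 0)) * nSj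
        + ∑ s ∈ Wj, (∑ ω : K → Bool, w ω *
            (if ω j = true ∧ ∀ k ∈ Qj.erase j ∪ A s, ω k = false then (1:ℝ) else 0)) * n s := by
        rw [Finset.sum_congr rfl fun ω _ => step ω, Finset.sum_add_distrib, ← Finset.sum_mul,
          Finset.sum_comm]
        congr 1
        exact Finset.sum_congr rfl fun s _ => (Finset.sum_mul _ _ _).symm
    _ = (ρ j * ∏ k ∈ Qj.erase j, (1 - ρ k)) * nSj
        + ∑ s ∈ Wj, (ρ j * ((∏ k ∈ Qj.erase j, (1 - ρ k)) * ∏ k ∈ A s, (1 - ρ k))) * n s := by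
        rw [key_sum ρ j _ hQ]
        congr 1
        refine Finset.sum_congr rfl fun s hs => ?_
        have hdisj : Disjoint (Qj.erase j) (A s) :=
          ((hA s hs).mono_right (Finset.erase_subset j Qj)).symm
        have hjU : j ∉ Qj.erase j ∪ A s := by
          rw [Finset.mem_union]
          rintro (h | h)
          · exact hQ h
          · exact Finset.disjoint_left.mp (hA s hs) h hj
        rw [key_sum ρ j _ hjU, Finset.prod_union hdisj]
    _ = (∏ k ∈ Qj.erase j, (1 - ρ k)) * ρ j *
        (nSj + ∑ s ∈ Wj, (∏ k ∈ A s, (1 - ρ k)) * n s) := by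
        rw [mul_add, Finset.mul_sum]
        congr 1
        · ring
        · exact Finset.sum_congr rfl fun s _ => by ring
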